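/- arXiv:2101.11546 — 2 statements merged into one kernel-verified Lean document; each statement's English description precedes it below -/
import Mathlib

section
/- Let q, x, y ∈ ℂ with 0 < |q| < 1 and x ≠ 0, y ≠ 0. Then all series below converge absolutely and (Σ_{a∈ℤ} q^{2a²} x^a)·(Σ_{b∈ℤ} q^{2b²} y^b) = (Σ_{m∈ℤ} q^{4m²} (xy)^m)·(Σ_{n∈ℤ} q^{4n²} (x y⁻¹)^n) + q² x · (Σ_{m∈ℤ} q^{4m²+4m} (xy)^m)·(Σ_{n∈ℤ} q^{4n²+4n} (x y⁻¹)^n). -/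
/-!
Multiply out the left-hand side into a double series over `(a, b) ∈ ℤ × ℤ` and split it by the
parity of `a + b`: writing `a = m + n + ε`, `b = m - n` with `ε ∈ {0, 1}`, the exponent identity
`2 (m + n + ε)² + 2 (m - n)² = 2ε² + (4m² + 4εm) + (4n² + 4εn)` makes each half a product of two
theta series. Absolute convergence is a root test: the `n`-th term is `(q ^ (k n + l) * x) ^ n`,
and its base tends to `0`.
-/

open Filter Topology

theorem summable_norm_pow_self_of_tendsto_zero {R : Type*} [NormedRing R] [NormOneClass R]
    {u : ℕ → R} (hu : Tendsto u atTop (𝓝 0)) : Summable fun n => ‖u n ^ n‖ := by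
  have hsmall : ∀ᶠ n in atTop, ‖u n‖ ≤ 2⁻¹ :=
    (tendsto_zero_iff_norm_tendsto_zero.mp hu).eventually (ge_mem_nhds (by norm_num))
  refine (summable_geometric_two).of_norm_bounded_eventually_nat ?_
  filter_upwards [hsmall] with n hn
  rw [norm_norm, one_div]
  exact (norm_pow_le _ _).trans (pow_le_pow_left₀ (norm_nonneg _) hn n)

section

variable {𝕜 : Type*} [NormedField 𝕜] {q : 𝕜}

theorem summable_norm_zpow_quadratic_nat (hq0 : q ≠ 0) (hq1 : ‖q‖ < 1) (x : 𝕜) {k : ℤ}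
    (hk : 0 < k) (l : ℤ) : Summable fun n : ℕ => ‖q ^ (k * n ^ 2 + l * n) * x ^ (n : ℤ)‖ := by
  have hterm (n : ℕ) : q ^ (k * n ^ 2 + l * n) * x ^ (n : ℤ) = (q ^ (k * n + l) * x) ^ n := by
    rw [← zpow_natCast, mul_zpow, ← zpow_mul]; ring_nf
  have hbase : Tendsto (fun n : ℕ => q ^ (k * n + l) * x) atTop (𝓝 0) := by
    have hqk : ‖q ^ k‖ < 1 := by
      rw [norm_zpow]; exact zpow_lt_one₀ (norm_pos_iff.mpr hq0) hq1 hk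
    have := (tendsto_pow_atTop_nhds_zero_of_norm_lt_one hqk).mul_const (q ^ l * x)
    rw [zero_mul] at this
    refine this.congr fun n => ?_
    rw [zpow_add₀ hq0, zpow_mul, zpow_natCast, mul_assoc]
  simpa only [hterm] using summable_norm_pow_self_of_tendsto_zero hbase

theorem summable_norm_zpow_quadratic (hq0 : q ≠ 0) (hq1 : ‖q‖ < 1) (x : 𝕜) {k : ℤ}
    (hk : 0 < k) (l : ℤ) : Summable fun n : ℤ => ‖q ^ (k * n ^ 2 + l * n) * x ^ n‖ := by
  refine .of_nat_of_neg (summable_norm_zpow_quadratic_nat hq0 hq1 x hk l) ?_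
  refine (summable_norm_zpow_quadratic_nat hq0 hq1 x⁻¹ hk (-l)).congr fun n => ?_
  rw [inv_zpow', neg_sq, neg_mul, mul_neg]

end

def sumDiffEquiv : (ℤ × ℤ) ⊕ (ℤ × ℤ) ≃ ℤ × ℤ where
  toFun := Sum.elim (fun p => (p.1 + p.2, p.1 - p.2)) (fun p => (p.1 + p.2 + 1, p.1 - p.2))
  invFun p := if (p.1 + p.2) % 2 = 0 then .inl ((p.1 + p.2) / 2, (p.1 - p.2) / 2)
    else .inr ((p.1 + p.2 - 1) / 2, (p.1 - p.2 - 1) / 2)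
  left_inv := by
    rintro (⟨m, n⟩ | ⟨m, n⟩) <;> dsimp only [Sum.elim_inl, Sum.elim_inr] <;> split <;>
      simp only [Sum.inl.injEq, Sum.inr.injEq, Prod.mk.injEq, reduceCtorEq] <;> omega
  right_inv := by
    rintro ⟨a, b⟩
    dsimp only
    split <;> simp only [Sum.elim_inl, Sum.elim_inr, Prod.mk.injEq] <;> omega

theorem tsum_prod_eq_tsum_add_sub {G : Type*} [AddCommGroup G] [UniformSpace G]
    [IsUniformAddGroup G] [CompleteSpace G] [T2Space G] {F : ℤ × ℤ → G} (hF : Summable F) :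
    ∑' p, F p =
      ∑' p : ℤ × ℤ, F (p.1 + p.2, p.1 - p.2) + ∑' p : ℤ × ℤ, F (p.1 + p.2 + 1, p.1 - p.2) := by
  have hF' := (sumDiffEquiv.summable_iff (f := F)).mpr hF
  rw [← sumDiffEquiv.tsum_eq]
  exact Summable.tsum_sum (f := fun c => F (sumDiffEquiv c))
    (hF'.comp_injective Sum.inl_injective) (hF'.comp_injective Sum.inr_injective)

theorem theta_term_mul_theta_term_sum_diff {K : Type*} [Field K] {q x y : K} (hq : q ≠ 0)
    (hx : x ≠ 0) (hy : y ≠ 0) (ε m n : ℤ) :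
    q ^ (2 * (m + n + ε) ^ 2) * x ^ (m + n + ε) * (q ^ (2 * (m - n) ^ 2) * y ^ (m - n)) =
      q ^ (2 * ε ^ 2) * x ^ ε * (q ^ (4 * m ^ 2 + 4 * ε * m) * (x * y) ^ m *
        (q ^ (4 * n ^ 2 + 4 * ε * n) * (x * y⁻¹) ^ n)) := by
  have hexp : q ^ (2 * (m + n + ε) ^ 2) * q ^ (2 * (m - n) ^ 2) =
      q ^ (2 * ε ^ 2) * q ^ (4 * m ^ 2 + 4 * ε * m) * q ^ (4 * n ^ 2 + 4 * ε * n) := by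
    simp only [← zpow_add₀ hq]; ring_nf
  simp only [mul_zpow, inv_zpow', zpow_add₀ hx, zpow_sub₀ hy, zpow_neg]
  linear_combination (x ^ m * x ^ n * x ^ ε * y ^ m * (y ^ n)⁻¹) * hexp

theorem stmt5 (q x y : ℂ) (hq0 : 0 < ‖q‖) (hq1 : ‖q‖ < 1)
    (hx : x ≠ 0) (hy : y ≠ 0) :
    (Summable fun a : ℤ => ‖q ^ (2 * a ^ 2) * x ^ a‖) ∧
    (Summable fun b : ℤ => ‖q ^ (2 * b ^ 2) * y ^ b‖) ∧
    (Summable fun m : ℤ => ‖q ^ (4 * m ^ 2) * (x * y) ^ m‖) ∧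
    (Summable fun n : ℤ => ‖q ^ (4 * n ^ 2) * (x * y⁻¹) ^ n‖) ∧
    (Summable fun m : ℤ => ‖q ^ (4 * m ^ 2 + 4 * m) * (x * y) ^ m‖) ∧
    (Summable fun n : ℤ => ‖q ^ (4 * n ^ 2 + 4 * n) * (x * y⁻¹) ^ n‖) ∧
    (∑' a : ℤ, q ^ (2 * a ^ 2) * x ^ a) * (∑' b : ℤ, q ^ (2 * b ^ 2) * y ^ b) =
      (∑' m : ℤ, q ^ (4 * m ^ 2) * (x * y) ^ m) *
        (∑' n : ℤ, q ^ (4 * n ^ 2) * (x * y⁻¹) ^ n) +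
      q ^ 2 * x * ((∑' m : ℤ, q ^ (4 * m ^ 2 + 4 * m) * (x * y) ^ m) *
        (∑' n : ℤ, q ^ (4 * n ^ 2 + 4 * n) * (x * y⁻¹) ^ n)) := by
  have hq : q ≠ 0 := norm_pos_iff.mp hq0
  have summable (z : ℂ) {k : ℤ} (hk : 0 < k) (l : ℤ) := summable_norm_zpow_quadratic hq hq1 z hk l
  have hx_sum : Summable fun a : ℤ => ‖q ^ (2 * a ^ 2) * x ^ a‖ := by
    simpa using summable x two_pos 0
  have hy_sum : Summable fun b : ℤ => ‖q ^ (2 * b ^ 2) * y ^ b‖ := by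
    simpa using summable y two_pos 0
  have hxy_sum : Summable fun m : ℤ => ‖q ^ (4 * m ^ 2) * (x * y) ^ m‖ := by
    simpa using summable (x * y) four_pos 0
  have hxy'_sum : Summable fun n : ℤ => ‖q ^ (4 * n ^ 2) * (x * y⁻¹) ^ n‖ := by
    simpa using summable (x * y⁻¹) four_pos 0
  have hxy_shift_sum := summable (x * y) four_pos 4
  have hxy'_shift_sum := summable (x * y⁻¹) four_pos 4
  refine ⟨hx_sum, hy_sum, hxy_sum, hxy'_sum, hxy_shift_sum, hxy'_shift_sum, ?_⟩
  rw [tsum_mul_tsum_of_summable_norm hx_sum hy_sum,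
    tsum_prod_eq_tsum_add_sub (hx_sum.mul_norm hy_sum).of_norm,
    tsum_mul_tsum_of_summable_norm hxy_sum hxy'_sum,
    tsum_mul_tsum_of_summable_norm hxy_shift_sum hxy'_shift_sum, ← tsum_mul_left]
  congr 1 <;> refine tsum_congr fun p => ?_
  · simpa using theta_term_mul_theta_term_sum_diff hq hx hy 0 p.1 p.2
  · simpa using theta_term_mul_theta_term_sum_diff hq hx hy 1 p.1 p.2
end

section
/- Let m₀, k₀, m∞, k∞ be integers with gcd(m∞, k∞) = 1, and set n = m₀ k∞ + m∞ k₀; assume n ≠ 0. Let v = (v₁, v₂) ∈ ℤ² be such that k∞ v₁ + m∞ v₂ ≡ 0 (mod n). Then v lies in the subgroup of ℤ² generated by (m₀, k₀) and (-m∞, k∞); in particular also -k₀ v₁ + m₀ v₂ ≡ 0 (mod n). -/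
theorem stmt9 (m₀ k₀ minf kinf : ℤ) (hgcd : Int.gcd minf kinf = 1)
    (n : ℤ) (hn : n = m₀ * kinf + minf * k₀) (hn0 : n ≠ 0)
    (v₁ v₂ : ℤ) (hv : n ∣ kinf * v₁ + minf * v₂) :
    (∃ a b : ℤ, v₁ = a * m₀ + b * (-minf) ∧ v₂ = a * k₀ + b * kinf) ∧
      n ∣ -k₀ * v₁ + m₀ * v₂ := by
  obtain ⟨t, ht⟩ := hv
  have key : kinf * (t * m₀ - v₁) = minf * (v₂ - t * k₀) := by
    subst hn; ring_nf; linarith [ht]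
  have hrep : ∃ b : ℤ, v₁ = t * m₀ + b * (-minf) ∧ v₂ = t * k₀ + b * kinf := by
    by_cases hm : minf = 0
    · have hk : kinf = 1 ∨ kinf = -1 := by
        have := hgcd; rw [hm] at this
        simpa [Int.gcd] using Int.isUnit_iff.mp (Int.isUnit_iff_natAbs_eq.mpr (by simpa [Int.gcd, hm] using this))
      have hv1 : v₁ = t * m₀ := by
        rcases hk with h | h <;> rw [hm, h] at key <;> linarith
      exact ⟨kinf * (v₂ - t * k₀), by simp [hv1, hm], by
        rcases hk with h | h <;> rw [h] <;> ring⟩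
    · have hcop : IsCoprime minf kinf := Int.isCoprime_iff_gcd_eq_one.mpr hgcd
      have hdvd : minf ∣ t * m₀ - v₁ :=
        hcop.dvd_of_dvd_mul_left ⟨v₂ - t * k₀, key⟩
      obtain ⟨b, hb⟩ := hdvd
      refine ⟨b, by linarith [hb], ?_⟩
      have : minf * (kinf * b) = minf * (v₂ - t * k₀) := by
        rw [← key, hb]; ring
      have := mul_left_cancel₀ hm this
      linarith
  obtain ⟨b, hb1, hb2⟩ := hrep
  refine ⟨⟨t, b, hb1, hb2⟩, ⟨b, ?_⟩⟩
  subst hn; rw [hb1, hb2]; ring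
end
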